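/- Let ρ be positive definite on a finite-dimensional Hilbert space, H Hermitian, and suppose L, L' ∈ ℕ with eigenstates |Ψ₀⟩,|Ψ₁⟩ of H^{(L)} having eigenvalues ℰ₀ < ℰ₁, and eigenstates |Ψ'₀⟩,|Ψ'₁⟩ of H^{(L')}. Define S_i = -log⟨Ψ_i|ρ^{⊗L}|Ψ_i⟩, β = (S₁-S₀)/(ℰ₁-ℰ₀), and analogously Δℰ' and ΔS' for the primed states, assuming Δℰ' > 0 or (Δℰ' = 0 and ΔS' ≥ 0). If β < 0 or ΔS' ≠ β·Δℰ', then there exist m, m' ∈ ℕ such that the unitary O built from B_{ij} = (|Ψ_i⟩⟨Ψ_j|)^{⊗m} ⊗ (|Ψ'_{1-i}⟩⟨Ψ'_{1-j}|)^{⊗m'} via O = I - ∑_{i,j}(-1)^{i-j}B_{ij} satisfies W(ρ^{⊗(mL+m'L')}, H^{(mL+m'L')}, O) > 0. -/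

import Mathlib

open Matrix ComplexOrder

/-- The operator acting as `H` on site `k` and as the identity elsewhere. -/
def siteOp {n : Type*} [Fintype n] [DecidableEq n] {ι : Type*} [Fintype ι] [DecidableEq ι]
    (H : Matrix n n ℂ) (k : ι) : Matrix (ι → n) (ι → n) ℂ :=
  Matrix.of fun a b => (if ∀ j, j ≠ k → a j = b j then 1 else 0) * H (a k) (b k)

/-- The extensive Hamiltonian `H^{(ι)} = ∑_k I⊗⋯⊗H⊗⋯⊗I`. -/
noncomputable def extOp {n : Type*} [Fintype n] [DecidableEq n]
    (H : Matrix n n ℂ) (ι : Type*) [Fintype ι] [DecidableEq ι] :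
    Matrix (ι → n) (ι → n) ℂ :=
  ∑ k : ι, siteOp H k

/-- The tensor power `ρ^{⊗ι}` of a state. -/
noncomputable def tensorState {n : Type*} [Fintype n]
    (ρ : Matrix n n ℂ) (ι : Type*) [Fintype ι] : Matrix (ι → n) (ι → n) ℂ :=
  Matrix.of fun a b => ∏ s : ι, ρ (a s) (b s)

/-- `B_{ij} = (|Ψ_i⟩⟨Ψ_j|)^{⊗m} ⊗ (|Ψ'_{1-i}⟩⟨Ψ'_{1-j}|)^{⊗m'}` as a matrix on
`ℋ^{⊗(mL+m'L')}`, whose copies are indexed by `Fin m × Fin L ⊕ Fin m' × Fin L'`. -/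
noncomputable def Bmat {n : Type*} [Fintype n] [DecidableEq n] (L L' m m' : ℕ)
    (Ψ : Fin 2 → (Fin L → n) → ℂ) (Ψ' : Fin 2 → (Fin L' → n) → ℂ) (i j : Fin 2) :
    Matrix ((Fin m × Fin L ⊕ Fin m' × Fin L') → n)
      ((Fin m × Fin L ⊕ Fin m' × Fin L') → n) ℂ :=
  Matrix.of fun a b =>
    (∏ c : Fin m,
      Ψ i (fun k => a (Sum.inl (c, k))) * star (Ψ j (fun k => b (Sum.inl (c, k))))) *
    (∏ c : Fin m',
      Ψ' (1 - i) (fun k => a (Sum.inr (c, k))) * star (Ψ' (1 - j) (fun k => b (Sum.inr (c, k)))))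

/-- `O = I - ∑_{i,j}(-1)^{i-j}B_{ij}`. -/
noncomputable def Omat {n : Type*} [Fintype n] [DecidableEq n] (L L' m m' : ℕ)
    (Ψ : Fin 2 → (Fin L → n) → ℂ) (Ψ' : Fin 2 → (Fin L' → n) → ℂ) :
    Matrix ((Fin m × Fin L ⊕ Fin m' × Fin L') → n)
      ((Fin m × Fin L ⊕ Fin m' × Fin L') → n) ℂ :=
  1 - ∑ i : Fin 2, ∑ j : Fin 2, ((-1 : ℂ)) ^ ((i : ℕ) + (j : ℕ)) • Bmat L L' m m' Ψ Ψ' i j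

/-!
The vectors `Φ_i = Ψ_i^{⊗m} ⊗ Ψ'_{1-i}^{⊗m'}` are orthonormal eigenvectors of the extensive
Hamiltonian with energies `e_i = m ℰ_i + m' ℰ'_{1-i}`, and `O = I - |χ⟩⟨χ|` with `χ = Φ_0 - Φ_1`
swaps them while fixing their orthogonal complement. Hence `H - O† H O` is
`(e_0 - e_1) (|Φ_0⟩⟨Φ_0| - |Φ_1⟩⟨Φ_1|)`, and since `⟨Φ_i|ρ^{⊗}|Φ_i⟩ = exp (-(m S_i + m' S'_{1-i}))`
the extracted work is `(mΔℰ - m'Δℰ') (e^{-(m S_1 + m' S'_0)} - e^{-(m S_0 + m' S'_1)})`, whose sign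
is that of `(mΔℰ - m'Δℰ') (m'ΔS' - mΔS)`. The hypotheses give a real ratio `t ≥ 0` with
`(Δℰ - tΔℰ') (tΔS' - ΔS) > 0`; this condition is open, so it also holds at a rational `t = m'/m`.
-/

section SiteOperators

variable {n ι : Type*} [Fintype n] [DecidableEq n] [Fintype ι] [DecidableEq ι]

lemma siteOp_mulVec_apply (H : Matrix n n ℂ) (k : ι) (v : (ι → n) → ℂ) (a : ι → n) :
    (siteOp H k *ᵥ v) a = ∑ x, H (a k) x * v (Function.update a k x) := by
  have hsite : ∀ b, siteOp H k a b = ∑ x, if Function.update a k x = b then H (a k) x else 0 := by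
    intro b
    simp only [Function.update_eq_iff, ite_and, Finset.sum_ite_eq', Finset.mem_univ, if_true,
      siteOp, of_apply, ite_mul, one_mul, zero_mul]
  simp only [mulVec, dotProduct, hsite, Finset.sum_mul, ite_mul, zero_mul]
  rw [Finset.sum_comm]
  simp

lemma extOp_mulVec_apply (H : Matrix n n ℂ) (v : (ι → n) → ℂ) (a : ι → n) :
    (extOp H ι *ᵥ v) a = ∑ k, ∑ x, H (a k) x * v (Function.update a k x) := by
  simp only [extOp, sum_mulVec, Finset.sum_apply, siteOp_mulVec_apply]

lemma siteOp_isHermitian {H : Matrix n n ℂ} (hH : H.IsHermitian) (k : ι) :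
    (siteOp H k).IsHermitian := by
  refine IsHermitian.ext fun a b => ?_
  simp only [siteOp, of_apply, star_mul', hH.apply, apply_ite star, star_one, star_zero, eq_comm]

lemma extOp_isHermitian {H : Matrix n n ℂ} (hH : H.IsHermitian) : (extOp H ι).IsHermitian :=
  isSelfAdjoint_sum _ fun k _ => siteOp_isHermitian hH k

end SiteOperators

section TensorVectors

variable {n σ τ κ : Type*}

def tensorVec (F : (σ → n) → ℂ) (G : (τ → n) → ℂ) : (σ ⊕ τ → n) → ℂ :=
  fun a => F (a ∘ Sum.inl) * G (a ∘ Sum.inr)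

def piTensorVec [Fintype κ] (F : κ → (σ → n) → ℂ) : (κ × σ → n) → ℂ :=
  fun a => ∏ c, F c (Function.curry a c)

lemma tensorVec_smul_left (μ : ℂ) (F : (σ → n) → ℂ) (G : (τ → n) → ℂ) :
    tensorVec (μ • F) G = μ • tensorVec F G := by
  ext a
  simp [tensorVec, mul_assoc]

lemma tensorVec_smul_right (μ : ℂ) (F : (σ → n) → ℂ) (G : (τ → n) → ℂ) :
    tensorVec F (μ • G) = μ • tensorVec F G := by
  ext a
  simp [tensorVec, mul_left_comm]

lemma piTensorVec_update_smul [Fintype κ] [DecidableEq κ] (F : κ → (σ → n) → ℂ) (c : κ) (μ : ℂ) :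
    piTensorVec (Function.update F c (μ • F c)) = μ • piTensorVec F := by
  ext a
  simp only [piTensorVec,
    Function.apply_update (fun c' (G : (σ → n) → ℂ) => G (Function.curry a c')),
    Finset.prod_update_of_mem (Finset.mem_univ c), Pi.smul_apply, smul_eq_mul, mul_assoc]
  rw [Finset.prod_eq_mul_prod_sdiff_singleton_of_mem (Finset.mem_univ c)]

variable [Fintype n] [DecidableEq n] [Fintype σ] [DecidableEq σ] [Fintype τ] [DecidableEq τ]
  [Fintype κ] [DecidableEq κ]

lemma extOp_mulVec_tensorVec (H : Matrix n n ℂ) (F : (σ → n) → ℂ) (G : (τ → n) → ℂ) :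
    extOp H (σ ⊕ τ) *ᵥ tensorVec F G =
      tensorVec (extOp H σ *ᵥ F) G + tensorVec F (extOp H τ *ᵥ G) := by
  ext a
  simp only [extOp_mulVec_apply, Fintype.sum_sum_type, tensorVec, Pi.add_apply,
    Function.update_comp_eq_of_injective _ Sum.inl_injective,
    Function.update_comp_eq_of_injective _ Sum.inr_injective,
    Function.update_comp_eq_of_forall_ne _ _ fun _ => Sum.inl_ne_inr,
    Function.update_comp_eq_of_forall_ne _ _ fun _ => Sum.inr_ne_inl, Finset.sum_mul,
    Finset.mul_sum, Function.comp_apply]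
  congr 1
  all_goals refine Finset.sum_congr rfl fun _ _ => Finset.sum_congr rfl fun _ _ => by ring

lemma extOp_mulVec_piTensorVec (H : Matrix n n ℂ) (F : κ → (σ → n) → ℂ) :
    extOp H (κ × σ) *ᵥ piTensorVec F =
      ∑ c, piTensorVec (Function.update F c (extOp H σ *ᵥ F c)) := by
  ext a
  simp only [extOp_mulVec_apply, Fintype.sum_prod_type, piTensorVec, Finset.sum_apply,
    Function.curry_update]
  refine Finset.sum_congr rfl fun c _ => ?_
  simp only [Function.apply_update (fun c' (f : σ → n) => F c' f),
    Function.apply_update (fun c' (G : (σ → n) → ℂ) => G (Function.curry a c')),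
    Finset.prod_update_of_mem (Finset.mem_univ c), extOp_mulVec_apply, Finset.sum_mul, mul_assoc]
  rfl

lemma extOp_mulVec_tensorVec_of_eigen (H : Matrix n n ℂ) {F : (σ → n) → ℂ} {G : (τ → n) → ℂ}
    {μ ν : ℂ} (hF : extOp H σ *ᵥ F = μ • F) (hG : extOp H τ *ᵥ G = ν • G) :
    extOp H (σ ⊕ τ) *ᵥ tensorVec F G = (μ + ν) • tensorVec F G := by
  rw [extOp_mulVec_tensorVec, hF, hG, tensorVec_smul_left, tensorVec_smul_right, add_smul]

lemma extOp_mulVec_piTensorVec_of_eigen (H : Matrix n n ℂ) {F : κ → (σ → n) → ℂ} {μ : κ → ℂ}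
    (hF : ∀ c, extOp H σ *ᵥ F c = μ c • F c) :
    extOp H (κ × σ) *ᵥ piTensorVec F = (∑ c, μ c) • piTensorVec F := by
  simp only [extOp_mulVec_piTensorVec, hF, piTensorVec_update_smul, Finset.sum_smul]

end TensorVectors

section TensorStates

variable {n ι : Type*} [Fintype n] [Fintype ι]

lemma conjTranspose_tensorState (A : Matrix n n ℂ) : (tensorState A ι)ᴴ = tensorState Aᴴ ι := by
  ext a b
  simp [tensorState, conjTranspose_apply]

lemma tensorState_one [DecidableEq n] : tensorState (1 : Matrix n n ℂ) ι = 1 := by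
  ext a b
  simp [tensorState, one_apply, Finset.prod_boole, funext_iff]

variable [DecidableEq ι]

lemma tensorState_mul (A B : Matrix n n ℂ) :
    tensorState A ι * tensorState B ι = tensorState (A * B) ι := by
  ext a b
  simp only [tensorState, mul_apply, of_apply, ← Finset.prod_mul_distrib]
  exact (Fintype.prod_sum fun s c => A (a s) c * B c (b s)).symm

open scoped MatrixOrder in
lemma Matrix.PosDef.tensorState [DecidableEq n] {ρ : Matrix n n ℂ} (hρ : ρ.PosDef) :
    (_root_.tensorState ρ ι).PosDef := by
  obtain ⟨S, rfl⟩ := CStarAlgebra.nonneg_iff_eq_star_mul_self.mp hρ.posSemidef.nonneg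
  have hsemi : (_root_.tensorState (star S * S) ι).PosSemidef := by
    rw [← tensorState_mul, star_eq_conjTranspose, ← conjTranspose_tensorState]
    exact posSemidef_conjTranspose_mul_self _
  refine hsemi.posDef_iff_isUnit.mpr <| (isUnit_iff_isUnit_det _).mpr <|
    isUnit_det_of_right_inverse (B := _root_.tensorState (star S * S)⁻¹ ι) ?_
  rw [tensorState_mul, mul_nonsing_inv _ ((isUnit_iff_isUnit_det _).mp hρ.isUnit), tensorState_one]

lemma star_dotProduct_tensorState_mulVec (ρ : Matrix n n ℂ) (u v : (ι → n) → ℂ) :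
    star u ⬝ᵥ tensorState ρ ι *ᵥ v = ∑ a, ∑ b, star (u a) * (∏ s, ρ (a s) (b s)) * v b := by
  simp only [dotProduct, mulVec, tensorState, of_apply, Pi.star_apply, Finset.mul_sum, mul_assoc]

variable {σ τ κ : Type*} [Fintype σ] [DecidableEq σ] [Fintype τ] [DecidableEq τ]
  [Fintype κ] [DecidableEq κ]

lemma star_tensorVec_dotProduct_tensorState_mulVec (ρ : Matrix n n ℂ) (F F' : (σ → n) → ℂ)
    (G G' : (τ → n) → ℂ) :
    star (tensorVec F G) ⬝ᵥ tensorState ρ (σ ⊕ τ) *ᵥ tensorVec F' G' =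
      (star F ⬝ᵥ tensorState ρ σ *ᵥ F') * (star G ⬝ᵥ tensorState ρ τ *ᵥ G') := by
  let e := (Equiv.sumArrowEquivProdArrow σ τ n).symm
  simp only [star_dotProduct_tensorState_mulVec, Finset.sum_mul_sum,
    ← Fintype.sum_equiv e _ _ (fun _ => rfl), Fintype.sum_prod_type]
  refine Finset.sum_congr rfl fun x _ => Finset.sum_congr rfl fun y _ =>
    Finset.sum_congr rfl fun x' _ => Finset.sum_congr rfl fun y' _ => ?_
  simp only [e, tensorVec, Fintype.prod_sum_type, Equiv.sumArrowEquivProdArrow_symm_apply_inl,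
    Equiv.sumArrowEquivProdArrow_symm_apply_inr, star_mul', Function.comp_def]
  ring

lemma star_piTensorVec_dotProduct_tensorState_mulVec (ρ : Matrix n n ℂ) (F F' : κ → (σ → n) → ℂ) :
    star (piTensorVec F) ⬝ᵥ tensorState ρ (κ × σ) *ᵥ piTensorVec F' =
      ∏ c, star (F c) ⬝ᵥ tensorState ρ σ *ᵥ F' c := by
  let e := (Equiv.curry κ σ n).symm
  rw [star_dotProduct_tensorState_mulVec, ← e.sum_comp]
  refine (Finset.sum_congr rfl fun f _ => (e.sum_comp _).symm).trans ?_
  simp only [star_dotProduct_tensorState_mulVec, Fintype.prod_sum]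
  refine Finset.sum_congr rfl fun f _ => Finset.sum_congr rfl fun g _ => ?_
  simp only [e, piTensorVec, Equiv.curry_symm_apply, Function.curry_uncurry, star_prod,
    Fintype.prod_prod_type, Function.uncurry_apply_pair, Finset.prod_mul_distrib]

end TensorStates

section SwapOperator

variable {μ : Type*} [Fintype μ]

lemma Matrix.IsHermitian.star_vecMul_of_mulVec_eq_smul {A : Matrix μ μ ℂ} (hA : A.IsHermitian)
    {v : μ → ℂ} {e : ℝ} (hv : A *ᵥ v = (e : ℂ) • v) : star v ᵥ* A = (e : ℂ) • star v := by
  rw [← hA.eq, ← star_mulVec, hv, star_smul, Complex.star_def, Complex.conj_ofReal]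

lemma Matrix.IsHermitian.star_dotProduct_eq_zero_of_mulVec_eq_smul {A : Matrix μ μ ℂ}
    (hA : A.IsHermitian) {u v : μ → ℂ} {e e' : ℝ} (hu : A *ᵥ u = (e : ℂ) • u)
    (hv : A *ᵥ v = (e' : ℂ) • v) (he : e ≠ e') : star u ⬝ᵥ v = 0 := by
  have h := dotProduct_mulVec (star u) A v
  rw [hv, hA.star_vecMul_of_mulVec_eq_smul hu, dotProduct_smul, smul_dotProduct, smul_eq_mul,
    smul_eq_mul] at h
  by_contra huv
  exact he (Complex.ofReal_injective (mul_right_cancel₀ huv h)).symm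

lemma Matrix.IsHermitian.star_dotProduct_eq_ite {A : Matrix μ μ ℂ} (hA : A.IsHermitian)
    {Ψ : Fin 2 → μ → ℂ} {E : Fin 2 → ℝ} (heig : ∀ i, A *ᵥ Ψ i = (E i : ℂ) • Ψ i)
    (hE : E 0 ≠ E 1) (hnorm : ∀ i, star (Ψ i) ⬝ᵥ Ψ i = 1) (i j : Fin 2) :
    star (Ψ i) ⬝ᵥ Ψ j = if i = j then 1 else 0 := by
  split_ifs with hij
  · exact hij ▸ hnorm i
  · refine hA.star_dotProduct_eq_zero_of_mulVec_eq_smul (heig i) (heig j) ?_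
    fin_cases i <;> fin_cases j <;> simp_all [eq_comm]

lemma star_dotProduct_self_eq_one {v : μ → ℂ} (hv : ∑ a, ‖v a‖ ^ 2 = 1) : star v ⬝ᵥ v = 1 := by
  have : star v ⬝ᵥ v = ((∑ a, ‖v a‖ ^ 2 : ℝ) : ℂ) := by
    simp [dotProduct, Complex.conj_mul']
  rw [this, hv, Complex.ofReal_one]

noncomputable def swapOp [DecidableEq μ] (Φ : Fin 2 → μ → ℂ) : Matrix μ μ ℂ :=
  1 - ∑ i : Fin 2, ∑ j : Fin 2, (-1 : ℂ) ^ ((i : ℕ) + (j : ℕ)) • vecMulVec (Φ i) (star (Φ j))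

lemma sub_conjTranspose_swapOp_mul_mul [DecidableEq μ] {A : Matrix μ μ ℂ} (hA : A.IsHermitian)
    {Φ : Fin 2 → μ → ℂ} {e : Fin 2 → ℝ} (heig : ∀ i, A *ᵥ Φ i = (e i : ℂ) • Φ i)
    (horth : ∀ i j, star (Φ i) ⬝ᵥ Φ j = if i = j then 1 else 0) :
    A - (swapOp Φ)ᴴ * A * swapOp Φ =
      ((e 0 - e 1 : ℝ) : ℂ) • vecMulVec (Φ 0) (star (Φ 0)) +
        ((e 1 - e 0 : ℝ) : ℂ) • vecMulVec (Φ 1) (star (Φ 1)) := by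
  set P : Fin 2 → Fin 2 → Matrix μ μ ℂ := fun i j => vecMulVec (Φ i) (star (Φ j)) with hP
  have hAP : ∀ i j, A * P i j = (e i : ℂ) • P i j := fun i j => by
    rw [hP, mul_vecMulVec, heig, smul_vecMulVec]
  have hPA : ∀ i j, P i j * A = (e j : ℂ) • P i j := fun i j => by
    rw [hP, vecMulVec_mul, hA.star_vecMul_of_mulVec_eq_smul (heig j), vecMulVec_smul]
  have hPP : ∀ i j k l, P i j * P k l = (if j = k then 1 else 0 : ℂ) • P i l := fun i j k l => by
    rw [hP, vecMulVec_mul_vecMulVec, horth, vecMulVec_smul]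
  have hPc : ∀ i j, (P i j)ᴴ = P j i := fun i j => by
    rw [hP, conjTranspose_vecMulVec, star_star]
  have hO : swapOp Φ = 1 - (P 0 0 - P 0 1 - P 1 0 + P 1 1) := by
    simp only [swapOp, Fin.sum_univ_two]
    norm_num
    abel
  rw [hO]
  simp only [conjTranspose_sub, conjTranspose_add, conjTranspose_one, hPc, mul_sub, sub_mul,
    mul_add, add_mul, mul_one, one_mul, Matrix.smul_mul, hAP, hPA, hPP, smul_smul]
  norm_num
  module

lemma trace_mul_sub_conjTranspose_swapOp_mul_mul [DecidableEq μ] (T : Matrix μ μ ℂ)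
    {A : Matrix μ μ ℂ} (hA : A.IsHermitian) {Φ : Fin 2 → μ → ℂ} {e : Fin 2 → ℝ}
    (heig : ∀ i, A *ᵥ Φ i = (e i : ℂ) • Φ i)
    (horth : ∀ i j, star (Φ i) ⬝ᵥ Φ j = if i = j then 1 else 0) :
    (T * (A - (swapOp Φ)ᴴ * A * swapOp Φ)).trace =
      ((e 0 - e 1 : ℝ) : ℂ) * (star (Φ 0) ⬝ᵥ T *ᵥ Φ 0) +
        ((e 1 - e 0 : ℝ) : ℂ) * (star (Φ 1) ⬝ᵥ T *ᵥ Φ 1) := by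
  simp only [sub_conjTranspose_swapOp_mul_mul hA heig horth, mul_add, Matrix.mul_smul, trace_add,
    trace_smul, mul_vecMulVec, trace_vecMulVec, smul_eq_mul, dotProduct_comm _ (star _)]

end SwapOperator

lemma exists_nat_div_mem_of_isOpen {U : Set ℝ} (hU : IsOpen U) {t : ℝ} (ht : 0 ≤ t)
    (htU : t ∈ U) : ∃ m m' : ℕ, 0 < m ∧ (m' : ℝ) / m ∈ U := by
  obtain ⟨ε, hε, hball⟩ := Metric.isOpen_iff.mp hU t htU
  obtain ⟨q, htq, hqt⟩ := exists_rat_btwn (lt_add_of_pos_right t hε)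
  have hq : 0 < q := by exact_mod_cast ht.trans_lt htq
  refine ⟨q.den, q.num.toNat, q.den_pos, hball ?_⟩
  have hnum : ((q.num.toNat : ℕ) : ℝ) = q.num := by
    exact_mod_cast Int.toNat_of_nonneg (Rat.num_pos.mpr hq).le
  rw [hnum, ← Rat.cast_def, Metric.mem_ball, Real.dist_eq, abs_sub_lt_iff]
  constructor <;> linarith

open Filter Topology in
lemma exists_nonneg_mul_pos {a b c d : ℝ} (ha : 0 < a) (hb : 0 < b ∨ (b = 0 ∧ 0 ≤ d))
    (h : c / a < 0 ∨ d ≠ c / a * b) : ∃ t : ℝ, 0 ≤ t ∧ 0 < (a - t * b) * (t * d - c) := by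
  rcases lt_or_ge (c / a) 0 with hc | hc
  · have hc' : c < 0 := by simpa using (div_lt_iff₀ ha).mp hc
    exact ⟨0, le_rfl, by nlinarith⟩
  have hc' : 0 ≤ c := by simpa using (le_div_iff₀ ha).mp hc
  set δ := d - c / a * b with hδ
  have hδ0 : δ ≠ 0 := sub_ne_zero.mpr (h.resolve_left hc.not_gt)
  rcases hb with hb | ⟨rfl, hd⟩
  · -- `t = a / b - η δ` with small `η > 0`: the first factor is `η b δ` and `δ` times the
    -- second one tends to `a δ ^ 2 / b`
    have h1 : ∀ᶠ η in 𝓝 (0 : ℝ), 0 < a / b - η * δ :=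
      ((by fun_prop : Continuous fun η : ℝ => a / b - η * δ).tendsto' 0 (a / b) (by simp))
        |>.eventually_const_lt (div_pos ha hb)
    have h2 : ∀ᶠ η in 𝓝 (0 : ℝ), 0 < δ * ((a / b - η * δ) * d - c) :=
      ((by fun_prop : Continuous fun η : ℝ => δ * ((a / b - η * δ) * d - c)).tendsto' 0
        (a / b * δ ^ 2) (by rw [hδ]; field_simp; ring)).eventually_const_lt
        (by positivity)
    obtain ⟨η, ⟨hη1, hη2⟩, hη⟩ :=
      ((eventually_nhdsWithin_of_eventually_nhds (h1.and h2)).and self_mem_nhdsWithin).exists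
        (f := 𝓝[>] 0)
    refine ⟨a / b - η * δ, hη1.le, ?_⟩
    have hfirst : a - (a / b - η * δ) * b = η * b * δ := by field_simp; ring
    rw [hfirst, mul_assoc]
    exact mul_pos (mul_pos hη hb) hη2
  · have hd' : 0 < d := lt_of_le_of_ne hd (by simpa [hδ] using hδ0.symm)
    refine ⟨c / d + 1, by positivity, ?_⟩
    have : (c / d + 1) * d - c = d := by field_simp; ring
    rw [this]
    nlinarith

lemma exists_nat_mul_pos {a b c d : ℝ} (ha : 0 < a) (hb : 0 < b ∨ (b = 0 ∧ 0 ≤ d))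
    (h : c / a < 0 ∨ d ≠ c / a * b) :
    ∃ m m' : ℕ, 0 < m ∧ 0 < (m * a - m' * b) * (m' * d - m * c) := by
  obtain ⟨t, ht, hpos⟩ := exists_nonneg_mul_pos ha hb h
  have hU : IsOpen {t : ℝ | 0 < (a - t * b) * (t * d - c)} :=
    isOpen_lt continuous_const (by fun_prop)
  obtain ⟨m, m', hm, hmem⟩ := exists_nat_div_mem_of_isOpen hU ht hpos
  refine ⟨m, m', hm, ?_⟩
  have hm' : (0 : ℝ) < m := Nat.cast_pos.mpr hm
  have key : (m * a - m' * b) * (m' * d - m * c) =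
      (m : ℝ) ^ 2 * ((a - m' / m * b) * (m' / m * d - c)) := by
    field_simp
  rw [key]
  exact mul_pos (by positivity) hmem

lemma mul_exp_sub_exp_pos {x u v : ℝ} (h : 0 < x * (v - u)) :
    0 < x * (Real.exp v - Real.exp u) := by
  rcases mul_pos_iff.mp h with ⟨hx, hvu⟩ | ⟨hx, hvu⟩
  · exact mul_pos hx (sub_pos.mpr (Real.exp_lt_exp.mpr (sub_pos.mp hvu)))
  · exact mul_pos_of_neg_of_neg hx (sub_neg.mpr (Real.exp_lt_exp.mpr (sub_neg.mp hvu)))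

lemma Complex.ofReal_exp_log_re {z : ℂ} (hz : 0 < z) : (Real.exp (Real.log z.re) : ℂ) = z := by
  obtain ⟨hre, him⟩ := Complex.pos_iff.mp hz
  exact Complex.ext (by simp [Real.exp_log hre]) (by simp [him])

section TensorPowPair

variable {n σ τ : Type*} (m m' : ℕ) (Ψ : Fin 2 → (σ → n) → ℂ) (Ψ' : Fin 2 → (τ → n) → ℂ)

def tensorPowPair (i : Fin 2) : (Fin m × σ ⊕ Fin m' × τ → n) → ℂ :=
  tensorVec (piTensorVec fun _ : Fin m => Ψ i) (piTensorVec fun _ : Fin m' => Ψ' (1 - i))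

variable [Fintype n] [Fintype σ] [DecidableEq σ] [Fintype τ] [DecidableEq τ]

lemma star_tensorPowPair_dotProduct_tensorState_mulVec (ρ : Matrix n n ℂ) (i j : Fin 2) :
    star (tensorPowPair m m' Ψ Ψ' i) ⬝ᵥ tensorState ρ _ *ᵥ tensorPowPair m m' Ψ Ψ' j =
      (star (Ψ i) ⬝ᵥ tensorState ρ σ *ᵥ Ψ j) ^ m *
        (star (Ψ' (1 - i)) ⬝ᵥ tensorState ρ τ *ᵥ Ψ' (1 - j)) ^ m' := by
  simp [tensorPowPair, star_tensorVec_dotProduct_tensorState_mulVec,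
    star_piTensorVec_dotProduct_tensorState_mulVec]

variable [DecidableEq n]

lemma extOp_mulVec_tensorPowPair (H : Matrix n n ℂ) {E E' : Fin 2 → ℝ}
    (hΨ : ∀ i, extOp H σ *ᵥ Ψ i = (E i : ℂ) • Ψ i)
    (hΨ' : ∀ i, extOp H τ *ᵥ Ψ' i = (E' i : ℂ) • Ψ' i) (i : Fin 2) :
    extOp H _ *ᵥ tensorPowPair m m' Ψ Ψ' i =
      ((m * E i + m' * E' (1 - i) : ℝ) : ℂ) • tensorPowPair m m' Ψ Ψ' i := by
  rw [tensorPowPair, extOp_mulVec_tensorVec_of_eigen H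
    (extOp_mulVec_piTensorVec_of_eigen H fun _ => hΨ i)
    (extOp_mulVec_piTensorVec_of_eigen H fun _ => hΨ' (1 - i))]
  simp

lemma star_tensorPowPair_dotProduct_tensorPowPair (hm : 0 < m)
    (hΨ : ∀ i j, star (Ψ i) ⬝ᵥ Ψ j = if i = j then 1 else 0)
    (hΨ' : ∀ i, star (Ψ' i) ⬝ᵥ Ψ' i = 1) (i j : Fin 2) :
    star (tensorPowPair m m' Ψ Ψ' i) ⬝ᵥ tensorPowPair m m' Ψ Ψ' j = if i = j then 1 else 0 := by
  have h := star_tensorPowPair_dotProduct_tensorState_mulVec m m' Ψ Ψ' 1 i j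
  simp only [tensorState_one, one_mulVec] at h
  rw [h, hΨ]
  split_ifs with hij
  · rw [hij, hΨ', one_pow, one_pow, one_mul]
  · rw [zero_pow hm.ne', zero_mul]

end TensorPowPair

section SwapOfTensorPowers

variable {n : Type*} [Fintype n] [DecidableEq n] (L L' m m' : ℕ) (Ψ : Fin 2 → (Fin L → n) → ℂ)
  (Ψ' : Fin 2 → (Fin L' → n) → ℂ)

lemma Bmat_eq_vecMulVec (i j : Fin 2) :
    Bmat L L' m m' Ψ Ψ' i j =
      vecMulVec (tensorPowPair m m' Ψ Ψ' i) (star (tensorPowPair m m' Ψ Ψ' j)) := by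
  ext a b
  simp only [Bmat, tensorPowPair, tensorVec, piTensorVec, of_apply, vecMulVec_apply, Pi.star_apply,
    star_mul', star_prod, Finset.prod_mul_distrib]
  exact mul_mul_mul_comm _ _ _ _

lemma Omat_eq_swapOp : Omat L L' m m' Ψ Ψ' = swapOp (tensorPowPair m m' Ψ Ψ') := by
  simp only [Omat, swapOp, Bmat_eq_vecMulVec]

end SwapOfTensorPowers

theorem positive_work_from_virtual_temperatures {n : Type*} [Fintype n] [DecidableEq n]
    (H : Matrix n n ℂ) (hH : H.IsHermitian)
    (ρ : Matrix n n ℂ) (hρ : ρ.PosDef)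
    (L L' : ℕ)
    (Ψ : Fin 2 → (Fin L → n) → ℂ) (Ψ' : Fin 2 → (Fin L' → n) → ℂ)
    (E E' : Fin 2 → ℝ)
    (hΨeig : ∀ i, (extOp H (Fin L)).mulVec (Ψ i) = ((E i : ℝ) : ℂ) • Ψ i)
    (hΨ'eig : ∀ i, (extOp H (Fin L')).mulVec (Ψ' i) = ((E' i : ℝ) : ℂ) • Ψ' i)
    (hΨnorm : ∀ i, ∑ a, ‖Ψ i a‖ ^ 2 = 1) (hΨ'norm : ∀ i, ∑ a, ‖Ψ' i a‖ ^ 2 = 1)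
    (hE : E 0 < E 1) :
    let S : Fin 2 → ℝ :=
      fun i => -Real.log ((star (Ψ i) ⬝ᵥ (tensorState ρ (Fin L)).mulVec (Ψ i)).re)
    let S' : Fin 2 → ℝ :=
      fun i => -Real.log ((star (Ψ' i) ⬝ᵥ (tensorState ρ (Fin L')).mulVec (Ψ' i)).re)
    let β : ℝ := (S 1 - S 0) / (E 1 - E 0)
    (0 < E' 1 - E' 0 ∨ (E' 1 - E' 0 = 0 ∧ 0 ≤ S' 1 - S' 0)) →
    (β < 0 ∨ S' 1 - S' 0 ≠ β * (E' 1 - E' 0)) →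
    ∃ m m' : ℕ,
      0 < ((tensorState ρ (Fin m × Fin L ⊕ Fin m' × Fin L') *
        (extOp H (Fin m × Fin L ⊕ Fin m' × Fin L') -
          (Omat L L' m m' Ψ Ψ')ᴴ * extOp H (Fin m × Fin L ⊕ Fin m' × Fin L') *
            Omat L L' m m' Ψ Ψ')).trace).re := by
  intro S S' β hE' hβ
  obtain ⟨m, m', hm, hpos⟩ := exists_nat_mul_pos (sub_pos.mpr hE) hE' hβ
  refine ⟨m, m', ?_⟩
  have hnorm := fun i => star_dotProduct_self_eq_one (hΨnorm i)
  have hnorm' := fun i => star_dotProduct_self_eq_one (hΨ'norm i)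
  have hexp : ∀ {ι : Type} [Fintype ι] [DecidableEq ι] {v : (ι → n) → ℂ}, star v ⬝ᵥ v = 1 →
      star v ⬝ᵥ tensorState ρ ι *ᵥ v =
        (Real.exp (Real.log (star v ⬝ᵥ tensorState ρ ι *ᵥ v).re) : ℂ) := fun hv =>
    (Complex.ofReal_exp_log_re <|
      hρ.tensorState.dotProduct_mulVec_pos (by rintro rfl; simp at hv)).symm
  have hP : ∀ i, star (tensorPowPair m m' Ψ Ψ' i) ⬝ᵥ tensorState ρ _ *ᵥ tensorPowPair m m' Ψ Ψ' i =
      (Real.exp (-(m * S i + m' * S' (1 - i))) : ℂ) := fun i => by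
    rw [star_tensorPowPair_dotProduct_tensorState_mulVec, hexp (hnorm i), hexp (hnorm' _)]
    simp only [← Complex.ofReal_pow, ← Complex.ofReal_mul, ← Real.exp_nat_mul, ← Real.exp_add,
      S, S']
    congr 2
    ring
  have hΨ := (extOp_isHermitian hH).star_dotProduct_eq_ite hΨeig hE.ne hnorm
  rw [Omat_eq_swapOp, trace_mul_sub_conjTranspose_swapOp_mul_mul _ (extOp_isHermitian hH)
    (extOp_mulVec_tensorPowPair m m' Ψ Ψ' H hΨeig hΨ'eig)
    (star_tensorPowPair_dotProduct_tensorPowPair m m' Ψ Ψ' hm hΨ hnorm'), hP, hP]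
  simp only [sub_zero, sub_self, ← Complex.ofReal_mul, ← Complex.ofReal_add, Complex.ofReal_re]
  have := mul_exp_sub_exp_pos (x := m * (E 1 - E 0) - m' * (E' 1 - E' 0))
    (u := -(m * S 0 + m' * S' 1)) (v := -(m * S 1 + m' * S' 0)) (hpos.trans_eq (by ring))
  linarith
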